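/- Let k ≥ 3 and 0 < γ < 1/4^{k−1}. There exists R₀ (depending only on k and γ) such that for every R ≥ R₀ and N = ⌈20(2k)^{k/2}⌉·R the following holds. Let φ : {−1,1}^R → ℝ be given by φ(1^R) = 1/2, φ((−1)^R) = −1/2, and φ(z) = 0 otherwise, and let ψ : {−1,1}^N → ℝ satisfy: ‖ψ‖₁ = 1; Σ_x ψ(x) = 0; Σ_{x ∈ D₊} |ψ(x)| ≤ 1/(48N) where D₊ = {x : ψ(x) > 0 and |x| ≥ k}; and Σ_{x ∈ D₋} |ψ(x)| ≤ 1/2 − 2/4^k where D₋ = {x : ψ(x) < 0 and |x| < k}. Then Σ_{x ∈ D} (φ★ψ)(x) · f(x) − Σ_{x ∈ {−1,1}^{NR} ∖ D} |(φ★ψ)(x)| ≥ 9/10, where f = GapOR_R^γ ∘ THR_N^k with domain D. -/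

import Mathlib

open Finset
open scoped Classical

/-- Hamming weight: the number of coordinates equal to −1 (encoded by `true`). -/
def wt {n : ℕ} (x : Fin n → Bool) : ℕ := (Finset.univ.filter (fun i => x i = true)).card

/-- `THR_N^k(x) = −1` (i.e. `true`) iff `|x| ≥ k`. -/
def THR (N k : ℕ) (x : Fin N → Bool) : Bool := decide (k ≤ wt x)

/-- The dual polynomial `φ` for GapOR: `φ(1^R) = 1/2`, `φ((−1)^R) = −1/2`, `φ(z) = 0` else. -/
noncomputable def phi0 (R : ℕ) : (Fin R → Bool) → ℝ := fun z =>
  if z = fun _ => false then 1 / 2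
  else if z = fun _ => true then -(1 / 2)
  else 0

/-- The dual block composition `(φ★ψ)(x) = 2^R · φ(sgn(ψ(x₁)),…,sgn(ψ(x_R))) · ∏ᵢ |ψ(xᵢ)|`. -/
noncomputable def dbc {N R : ℕ} (φ : (Fin R → Bool) → ℝ) (ψ : (Fin N → Bool) → ℝ)
    (x : Fin R → Fin N → Bool) : ℝ :=
  2 ^ R * φ (fun i => decide (ψ (x i) < 0)) * ∏ i, |ψ (x i)|

/-- The domain of `f = GapOR_R^γ ∘ THR_N^k`. -/
def inDom (γ : ℝ) (N R k : ℕ) (x : Fin R → Fin N → Bool) : Prop :=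
  (∀ i, THR N k (x i) = false) ∨
    γ * R ≤ ((Finset.univ.filter (fun i => THR N k (x i) = true)).card : ℝ)

/-- The value of `f = GapOR_R^γ ∘ THR_N^k` on its domain: `1` on the all-`+1` case,
`−1` otherwise. -/
noncomputable def fval (N R k : ℕ) (x : Fin R → Fin N → Bool) : ℝ :=
  if ∀ i, THR N k (x i) = false then 1 else -1

/-!
Write `ψ⁺, ψ⁻` for the positive and negative parts of `ψ`. Both have mass `1/2`, and
`φ★ψ = 2^(R-1) (∏ ψ⁺(xᵢ) - ∏ ψ⁻(xᵢ))` has total mass `1`. It agrees in sign with `f` on `D`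
except on two kinds of inputs, and each such input, like each input outside `D`, costs
`2 |φ★ψ(x)|`:
* false positives, all blocks positive but some block of weight `≥ k`: a union bound over the
  blocks bounds their cost by `2R · 1/(48N) ≤ 1/24`;
* false negatives, all blocks negative but fewer than `γR` blocks of weight `≥ k`: a Chernoff
  bound, weighting each heavy block by some `t < 1`, bounds their cost by `θ^R` with
  `θ = (1 - c + tc) / t^γ` and `c = 4/4^k > γ`. For `t = γ(1-c)/(c(1-γ))` one gets
  `θ = exp(-KL(γ ‖ c)) < 1`, so `θ^R ≤ 1/20` for large `R`.
Hence the correlation is at least `1 - 1/24 - 1/20 ≥ 9/10`.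
-/

section ProductWeights

variable {β : Type*} [Fintype β] {R : ℕ} {g : β → ℝ} (B : β → Prop) [DecidablePred B]

theorem prod_ite_eq_mul_pow {ι M : Type*} [Fintype ι] [DecidableEq ι] [CommMonoid M] (i : ι)
    (a b : M) : ∏ j, (if j = i then a else b) = a * b ^ (Fintype.card ι - 1) := by
  rw [Fintype.prod_eq_mul_prod_compl i, if_pos rfl,
    prod_congr rfl fun j hj => if_neg (by simpa using hj), prod_const, card_compl, card_singleton]

theorem sum_pi_ite_exists_prod_le (hg : 0 ≤ g) :
    ∑ x : Fin R → β, (if ∃ i, B (x i) then ∏ i, g (x i) else 0)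
      ≤ R * (∑ y with B y, g y) * (∑ y, g y) ^ (R - 1) := by
  set gB : β → ℝ := fun y => if B y then g y else 0
  have hslice (i : Fin R) :
      ∑ x : Fin R → β, ∏ j, (if j = i then gB else g) (x j)
        = (∑ y with B y, g y) * (∑ y, g y) ^ (R - 1) := by
    rw [← Fintype.prod_sum (fun j y => (if j = i then gB else g) y)]
    simp_rw [apply_ite (fun h : β → ℝ => ∑ y, h y)]
    rw [prod_ite_eq_mul_pow, Fintype.card_fin, sum_filter]
  have hpoint (x : Fin R → β) :
      (if ∃ i, B (x i) then ∏ i, g (x i) else 0) ≤ ∑ i, ∏ j, (if j = i then gB else g) (x j) := by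
    have hgB : 0 ≤ gB := fun y => by simp only [gB]; split_ifs; exacts [hg y, le_rfl]
    have hnonneg (i : Fin R) : 0 ≤ ∏ j, (if j = i then gB else g) (x j) :=
      prod_nonneg fun j _ => by split_ifs; exacts [hgB _, hg _]
    split_ifs with h
    · obtain ⟨i, hi⟩ := h
      refine le_trans (le_of_eq ?_) (single_le_sum (fun i _ => hnonneg i) (mem_univ i))
      refine prod_congr rfl fun j _ => ?_
      split_ifs with hj
      · subst hj; simp [gB, hi]
      · rfl
    · exact sum_nonneg fun i _ => hnonneg i
  calc _ ≤ ∑ x : Fin R → β, ∑ i, ∏ j, (if j = i then gB else g) (x j) :=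
        sum_le_sum fun x _ => hpoint x
    _ = _ := by
      rw [sum_comm]
      simp only [hslice, sum_const, card_univ, Fintype.card_fin, nsmul_eq_mul, mul_assoc]

theorem sum_pi_ite_card_lt_prod_le (hg : 0 ≤ g) {t : ℝ} (ht0 : 0 < t) (ht1 : t ≤ 1) (s : ℝ) :
    ∑ x : Fin R → β, (if (#{i | B (x i)} : ℝ) < s then ∏ i, g (x i) else 0)
      ≤ (∑ y, g y * if B y then t else 1) ^ R / t ^ s := by
  have hpoint (x : Fin R → β) : (if (#{i | B (x i)} : ℝ) < s then ∏ i, g (x i) else 0)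
      ≤ (∏ i, g (x i) * if B (x i) then t else 1) / t ^ s := by
    have hprod : ∏ i, (g (x i) * if B (x i) then t else 1)
        = (∏ i, g (x i)) * t ^ #{i | B (x i)} := by
      rw [prod_mul_distrib, prod_ite, prod_const, prod_const_one, mul_one]
    have hg' : 0 ≤ ∏ i, g (x i) := prod_nonneg fun i _ => hg _
    rw [hprod, mul_div_assoc]
    split_ifs with h
    · refine le_mul_of_one_le_right hg' ?_
      rw [one_le_div (Real.rpow_pos_of_pos ht0 s), ← Real.rpow_natCast]
      exact Real.rpow_le_rpow_of_exponent_ge ht0 ht1 h.le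
    · positivity
  calc _ ≤ ∑ x : Fin R → β, (∏ i, g (x i) * if B (x i) then t else 1) / t ^ s :=
        sum_le_sum fun x _ => hpoint x
    _ = _ := by rw [← sum_div, Fintype.sum_pow]

end ProductWeights

-- For this `t`, the claim is weighted AM-GM for `c/γ` and `(1-c)/(1-γ)` with weights `γ, 1-γ`.
theorem exists_one_sub_add_mul_lt_rpow {γ c : ℝ} (hγ : 0 < γ) (hγc : γ < c) (hc : c < 1) :
    ∃ t : ℝ, 0 < t ∧ t ≤ 1 ∧ 1 - c + t * c < t ^ γ := by
  have h1γ : 0 < 1 - γ := by linarith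
  have hc0 : 0 < c := hγ.trans hγc
  set p₁ := c / γ
  set p₂ := (1 - c) / (1 - γ)
  have hp₁ : 1 < p₁ := (one_lt_div hγ).mpr hγc
  have hp₂ : 0 < p₂ := div_pos (by linarith) h1γ
  have hp₂1 : p₂ < 1 := (div_lt_one h1γ).mpr (by linarith)
  have hamgm : p₁ ^ γ * p₂ ^ (1 - γ) < 1 := by
    have hmean : γ * p₁ + (1 - γ) * p₂ = 1 := by
      simp only [p₁, p₂]; field_simp; ring
    refine lt_of_lt_of_eq ?_ hmean
    exact (Real.geom_mean_lt_arith_mean2_weighted_iff_of_pos (p₁ := p₁) (p₂ := p₂) hγ h1γ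
      (by positivity) hp₂.le (add_sub_cancel γ 1)).mpr (by linarith)
  refine ⟨p₂ / p₁, by positivity, (div_le_one (by linarith)).mpr (by linarith), ?_⟩
  have hbase : 1 - c + p₂ / p₁ * c = p₂ := by
    simp only [p₁, p₂]; field_simp; ring
  have hsplit : p₂ ^ γ * p₂ ^ (1 - γ) = p₂ := by
    rw [← Real.rpow_add hp₂, add_sub_cancel, Real.rpow_one]
  rw [hbase, Real.div_rpow hp₂.le (by linarith), lt_div_iff₀ (by positivity)]
  calc p₂ * p₁ ^ γ = p₂ ^ γ * (p₁ ^ γ * p₂ ^ (1 - γ)) := by linear_combination (-(p₁ ^ γ)) * hsplit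
    _ < p₂ ^ γ := mul_lt_of_lt_one_right (by positivity) hamgm

theorem posPart_mul_negPart (a : ℝ) : a⁺ * a⁻ = 0 := by
  rcases le_total 0 a with h | h
  · rw [negPart_eq_zero.mpr h, mul_zero]
  · rw [posPart_eq_zero.mpr h, zero_mul]

theorem sum_posPart_eq_half_and_sum_negPart_eq_half {α : Type*} [Fintype α] {f : α → ℝ}
    (h₁ : ∑ y, |f y| = 1) (h₀ : ∑ y, f y = 0) : ∑ y, (f y)⁺ = 1 / 2 ∧ ∑ y, (f y)⁻ = 1 / 2 := by
  have hadd : ∑ y, (f y)⁺ + ∑ y, (f y)⁻ = 1 := by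
    rw [← sum_add_distrib, ← h₁]; simp only [posPart_add_negPart]
  have hsub : ∑ y, (f y)⁺ - ∑ y, (f y)⁻ = 0 := by
    rw [← sum_sub_distrib, ← h₀]; simp only [posPart_sub_negPart]
  constructor <;> linarith

section DualBlockComposition

variable {N R : ℕ} (ψ : (Fin N → Bool) → ℝ)

theorem dbc_phi0 (hR : 0 < R) (x : Fin R → Fin N → Bool) :
    dbc (phi0 R) ψ x = 2 ^ R / 2 * (∏ i, (ψ (x i))⁺ - ∏ i, (ψ (x i))⁻) := by
  let i₀ : Fin R := ⟨0, hR⟩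
  by_cases hP : ∀ i, 0 ≤ ψ (x i)
  · have hsign : (fun i => decide (ψ (x i) < 0)) = fun _ => false :=
      funext fun i => decide_eq_false (hP i).not_gt
    rw [dbc, hsign, phi0, if_pos rfl,
      prod_eq_zero (f := fun i => (ψ (x i))⁻) (mem_univ i₀) (negPart_eq_zero.mpr (hP i₀)),
      prod_congr rfl fun i _ => (abs_of_nonneg (hP i)).trans (posPart_eq_self.mpr (hP i)).symm]
    ring
  by_cases hQ : ∀ i, ψ (x i) < 0
  · have hsign : (fun i => decide (ψ (x i) < 0)) = fun _ => true :=
      funext fun i => decide_eq_true (hQ i)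
    have hne : (fun _ : Fin R => true) ≠ fun _ => false := fun h => by simpa using congrFun h i₀
    rw [dbc, hsign, phi0, if_neg hne, if_pos rfl,
      prod_eq_zero (f := fun i => (ψ (x i))⁺) (mem_univ i₀) (posPart_eq_zero.mpr (hQ i₀).le),
      prod_congr rfl fun i _ => (abs_of_neg (hQ i)).trans (negPart_eq_neg.mpr (hQ i).le).symm]
    ring
  push Not at hP hQ
  obtain ⟨i₁, hi₁⟩ := hP
  obtain ⟨i₂, hi₂⟩ := hQ
  have hfalse : (fun i => decide (ψ (x i) < 0)) ≠ fun _ => false :=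
    fun h => by simpa [hi₁] using congrFun h i₁
  have htrue : (fun i => decide (ψ (x i) < 0)) ≠ fun _ => true :=
    fun h => by simpa [hi₂.not_gt] using congrFun h i₂
  rw [dbc, phi0, if_neg hfalse, if_neg htrue,
    prod_eq_zero (f := fun i => (ψ (x i))⁺) (mem_univ i₁) (posPart_eq_zero.mpr hi₁.le),
    prod_eq_zero (f := fun i => (ψ (x i))⁻) (mem_univ i₂) (negPart_eq_zero.mpr hi₂)]
  ring

theorem abs_dbc_phi0 (hR : 0 < R) (x : Fin R → Fin N → Bool) :
    |dbc (phi0 R) ψ x| = 2 ^ R / 2 * (∏ i, (ψ (x i))⁺ + ∏ i, (ψ (x i))⁻) := by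
  have hP : 0 ≤ ∏ i, (ψ (x i))⁺ := prod_nonneg fun i _ => posPart_nonneg _
  have hQ : 0 ≤ ∏ i, (ψ (x i))⁻ := prod_nonneg fun i _ => negPart_nonneg _
  have hPQ : (∏ i, (ψ (x i))⁺) * ∏ i, (ψ (x i))⁻ = 0 := by
    rw [← prod_mul_distrib]
    exact prod_eq_zero (mem_univ ⟨0, hR⟩) (posPart_mul_negPart _)
  rw [dbc_phi0 ψ hR, abs_mul, abs_of_pos (by positivity)]
  rcases mul_eq_zero.mp hPQ with h | h
  · rw [h, zero_sub, zero_add, abs_neg, abs_of_nonneg hQ]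
  · rw [h, sub_zero, add_zero, abs_of_nonneg hP]

theorem sum_abs_dbc_phi0 (hR : 0 < R) (hpos : ∑ y, (ψ y)⁺ = 1 / 2) (hneg : ∑ y, (ψ y)⁻ = 1 / 2) :
    ∑ x, |dbc (phi0 R) ψ x| = 1 := by
  simp only [abs_dbc_phi0 ψ hR, ← mul_sum, sum_add_distrib]
  rw [← Fintype.sum_pow (fun y => (ψ y)⁺), ← Fintype.sum_pow (fun y => (ψ y)⁻),
    hpos, hneg, ← two_mul, div_pow, one_pow]
  field_simp

theorem gapOR_THR_term_eq {γ : ℝ} (hγ : 0 < γ) (hR : 0 < R) (k : ℕ) (x : Fin R → Fin N → Bool) :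
    (if inDom γ N R k x then dbc (phi0 R) ψ x * fval N R k x else 0)
        - (if ¬ inDom γ N R k x then |dbc (phi0 R) ψ x| else 0)
      = |dbc (phi0 R) ψ x|
        - 2 ^ R * ((if ∃ i, k ≤ wt (x i) then ∏ i, (ψ (x i))⁺ else 0)
          + (if (#{i | k ≤ wt (x i)} : ℝ) < γ * R then ∏ i, (ψ (x i))⁻ else 0)) := by
  have hTHR (y : Fin N → Bool) : THR N k y = true ↔ k ≤ wt y := decide_eq_true_iff
  have hnone : (∀ i, THR N k (x i) = false) ↔ ¬ ∃ i, k ≤ wt (x i) := by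
    simp only [← hTHR, Bool.not_eq_true, not_exists]
  have hcard : #{i | THR N k (x i) = true} = #{i | k ≤ wt (x i)} := by
    simp only [hTHR]
  have hγR : 0 < γ * R := mul_pos hγ (Nat.cast_pos.mpr hR)
  rw [abs_dbc_phi0 ψ hR, dbc_phi0 ψ hR]
  by_cases hex : ∃ i, k ≤ wt (x i)
  · by_cases hlt : (#{i | k ≤ wt (x i)} : ℝ) < γ * R
    · have hD : ¬ inDom γ N R k x := by
        rw [inDom, hnone, hcard, not_or, not_not, not_le]
        exact ⟨hex, hlt⟩
      rw [if_neg hD, if_pos hD, if_pos hex, if_pos hlt]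
      ring
    · have hD : inDom γ N R k x := Or.inr (by rw [hcard]; exact not_lt.mp hlt)
      have hf : fval N R k x = -1 := if_neg (hnone.not.mpr (not_not.mpr hex))
      rw [if_pos hD, if_neg (not_not.mpr hD), hf, if_pos hex, if_neg hlt]
      ring
  · have hD : inDom γ N R k x := Or.inl (hnone.mpr hex)
    have hzero : #{i | k ≤ wt (x i)} = 0 := by
      simpa [filter_eq_empty_iff] using hex
    rw [if_pos hD, if_neg (not_not.mpr hD), fval, if_pos (hnone.mpr hex), if_neg hex, hzero,
      Nat.cast_zero, if_pos hγR]
    ring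

theorem gapOR_THR_correlation_eq {γ : ℝ} (hγ : 0 < γ) (hR : 0 < R) (k : ℕ)
    (hpos : ∑ y, (ψ y)⁺ = 1 / 2) (hneg : ∑ y, (ψ y)⁻ = 1 / 2) :
    (∑ x with inDom γ N R k x, dbc (phi0 R) ψ x * fval N R k x)
        - ∑ x with ¬ inDom γ N R k x, |dbc (phi0 R) ψ x|
      = 1 - 2 ^ R * ∑ x : Fin R → Fin N → Bool,
            (if ∃ i, k ≤ wt (x i) then ∏ i, (ψ (x i))⁺ else 0)
          - 2 ^ R * ∑ x : Fin R → Fin N → Bool,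
            (if (#{i | k ≤ wt (x i)} : ℝ) < γ * R then ∏ i, (ψ (x i))⁻ else 0) := by
  rw [sum_filter, sum_filter, ← sum_sub_distrib]
  simp only [gapOR_THR_term_eq ψ hγ hR k]
  rw [sum_sub_distrib, sum_abs_dbc_phi0 ψ hR hpos hneg, ← mul_sum, sum_add_distrib]
  ring

end DualBlockComposition

section ErrorBounds

variable {N : ℕ} (ψ : (Fin N → Bool) → ℝ) (k R : ℕ)

theorem two_pow_mul_sum_falsePos_le (hpos : ∑ y, (ψ y)⁺ = 1 / 2) :
    2 ^ R * ∑ x : Fin R → Fin N → Bool, (if ∃ i, k ≤ wt (x i) then ∏ i, (ψ (x i))⁺ else 0)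
      ≤ 2 * R * ∑ y with 0 < ψ y ∧ k ≤ wt y, |ψ y| := by
  have hB : ∑ y with k ≤ wt y, (ψ y)⁺ = ∑ y with 0 < ψ y ∧ k ≤ wt y, |ψ y| := by
    rw [sum_filter, sum_filter]
    refine sum_congr rfl fun y _ => ?_
    rcases lt_or_ge 0 (ψ y) with h | h
    · simp [h, abs_of_pos h, posPart_eq_self.mpr h.le]
    · simp [h.not_gt, posPart_eq_zero.mpr h]
  calc _ ≤ 2 ^ R * (R * (∑ y with k ≤ wt y, (ψ y)⁺) * (∑ y, (ψ y)⁺) ^ (R - 1)) :=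
        mul_le_mul_of_nonneg_left (sum_pi_ite_exists_prod_le _ fun y => posPart_nonneg _)
          (by positivity)
    _ = 2 * R * ∑ y with 0 < ψ y ∧ k ≤ wt y, |ψ y| := by
      rw [hB, hpos]
      rcases R with _ | R
      · simp
      · rw [Nat.add_sub_cancel, pow_succ, div_pow, one_pow]
        field_simp

theorem two_pow_mul_sum_falseNeg_le (hneg : ∑ y, (ψ y)⁻ = 1 / 2) (γ : ℝ) {c t : ℝ} (ht0 : 0 < t)
    (ht1 : t ≤ 1) (hA : ∑ y with ψ y < 0 ∧ wt y < k, |ψ y| ≤ (1 - c) / 2) :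
    2 ^ R * ∑ x : Fin R → Fin N → Bool,
        (if (#{i | k ≤ wt (x i)} : ℝ) < γ * R then ∏ i, (ψ (x i))⁻ else 0)
      ≤ ((1 - c + t * c) / t ^ γ) ^ R := by
  have hsplit : ∑ y, (ψ y)⁻ * (if k ≤ wt y then t else 1)
      = t * ∑ y, (ψ y)⁻ + (1 - t) * ∑ y with ψ y < 0 ∧ wt y < k, |ψ y| := by
    rw [sum_filter, mul_sum, mul_sum, ← sum_add_distrib]
    refine sum_congr rfl fun y _ => ?_
    rcases lt_or_ge (ψ y) 0 with h | h
    · by_cases hB : k ≤ wt y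
      · simp [hB, not_lt.mpr hB, mul_comm]
      · simp [hB, h, not_le.mp hB, abs_of_neg h, negPart_eq_neg.mpr h.le]; ring
    · simp [h.not_gt, negPart_eq_zero.mpr h]
  have hbase : ∑ y, (ψ y)⁻ * (if k ≤ wt y then t else 1) ≤ (1 - c + t * c) / 2 := by
    rw [hsplit, hneg]
    linarith [mul_le_mul_of_nonneg_left hA (sub_nonneg.mpr ht1)]
  calc _ ≤ 2 ^ R * ((∑ y, (ψ y)⁻ * (if k ≤ wt y then t else 1)) ^ R / t ^ (γ * R)) :=
        mul_le_mul_of_nonneg_left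
          (sum_pi_ite_card_lt_prod_le _ (fun y => negPart_nonneg _) ht0 ht1 _) (by positivity)
    _ ≤ 2 ^ R * (((1 - c + t * c) / 2) ^ R / t ^ (γ * R)) := by
      gcongr
    _ = ((1 - c + t * c) / t ^ γ) ^ R := by
      rw [Real.rpow_mul ht0.le, Real.rpow_natCast, div_pow, div_pow]
      field_simp

end ErrorBounds

theorem stmt11 (k : ℕ) (hk : 3 ≤ k) (γ : ℝ) (hγ0 : 0 < γ) (hγ : γ < 1 / 4 ^ (k - 1)) :
    ∃ R₀ : ℕ, ∀ R : ℕ, R₀ ≤ R →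
      ∀ N : ℕ, N = ⌈(20 : ℝ) * (2 * (k : ℝ)) ^ ((k : ℝ) / 2)⌉₊ * R →
      ∀ ψ : (Fin N → Bool) → ℝ,
        (∑ x : Fin N → Bool, |ψ x| = 1) →
        (∑ x : Fin N → Bool, ψ x = 0) →
        (∑ x ∈ Finset.univ.filter (fun x : Fin N → Bool => 0 < ψ x ∧ k ≤ wt x), |ψ x|
          ≤ 1 / (48 * N)) →
        (∑ x ∈ Finset.univ.filter (fun x : Fin N → Bool => ψ x < 0 ∧ wt x < k), |ψ x|
          ≤ 1 / 2 - 2 / 4 ^ k) →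
        9 / 10 ≤
          (∑ x ∈ Finset.univ.filter (fun x : Fin R → Fin N → Bool => inDom γ N R k x),
              dbc (phi0 R) ψ x * fval N R k x)
          - ∑ x ∈ Finset.univ.filter (fun x : Fin R → Fin N → Bool => ¬ inDom γ N R k x),
              |dbc (phi0 R) ψ x| := by
  set c : ℝ := 4 / 4 ^ k
  have hγc : γ < c := hγ.trans_eq <| by
    rw [div_eq_div_iff (by positivity) (by positivity), one_mul, ← pow_succ',
      Nat.sub_add_cancel (by omega)]
  have hc1 : c < 1 := (div_lt_one (by positivity)).mpr <| by
    simpa using pow_lt_pow_right₀ (by norm_num : (1 : ℝ) < 4) (by omega : 1 < k)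
  obtain ⟨t, ht0, ht1, ht⟩ := exists_one_sub_add_mul_lt_rpow hγ0 hγc hc1
  have hθ : (1 - c + t * c) / t ^ γ < 1 := (div_lt_one (by positivity)).mpr ht
  obtain ⟨n, hn⟩ := exists_pow_lt_of_lt_one (by norm_num : (0 : ℝ) < 1 / 20) hθ
  refine ⟨max n 1, fun R hR N hN ψ hψ₁ hψ₀ hDpos hDneg => ?_⟩
  obtain ⟨hpos, hneg⟩ := sum_posPart_eq_half_and_sum_negPart_eq_half hψ₁ hψ₀
  have hR0 : 0 < R := by omega
  have hceil : 0 < ⌈(20 : ℝ) * (2 * (k : ℝ)) ^ ((k : ℝ) / 2)⌉₊ :=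
    Nat.ceil_pos.mpr (mul_pos (by norm_num) (Real.rpow_pos_of_pos (by positivity) _))
  have hRN : (R : ℝ) ≤ N := by
    rw [hN, Nat.cast_mul]
    exact le_mul_of_one_le_left (Nat.cast_nonneg R) (Nat.one_le_cast.mpr hceil)
  have hN0 : (0 : ℝ) < N := (Nat.cast_pos.mpr hR0).trans_le hRN
  have hfalsePos : 2 * (R : ℝ) * ∑ y with 0 < ψ y ∧ k ≤ wt y, |ψ y| ≤ 1 / 24 := by
    calc _ ≤ 2 * (R : ℝ) * (1 / (48 * N)) := by gcongr
      _ ≤ 1 / 24 := by rw [mul_one_div, div_le_div_iff₀ (by positivity) (by norm_num)]; linarith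
  have hfalseNeg := two_pow_mul_sum_falseNeg_le ψ k R hneg γ (c := c) ht0 ht1
    (hDneg.trans_eq (by simp only [c]; ring))
  have hθR : ((1 - c + t * c) / t ^ γ) ^ R ≤ 1 / 20 :=
    (pow_le_pow_of_le_one (by positivity) hθ.le (le_of_max_le_left hR)).trans hn.le
  rw [gapOR_THR_correlation_eq ψ hγ0 hR0 k hpos hneg]
  linarith [two_pow_mul_sum_falsePos_le ψ k R hpos]
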